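/- arXiv:math/0404330 — 3 statements merged into one kernel-verified Lean document; each statement's English description precedes it below -/
import Mathlib

section
/- Let A, B be diagonal 2×2 complex matrices and let X, Y be invertible 2×2 complex matrices such that X*A*Y = diag(z₀, 1) and X*B*Y = diag(1, z₁) for some complex numbers z₀, z₁ with |z₀| < 1 and |z₁| < 1. If X₁₁ = 0 (i.e., the (1,1) entry of X vanishes) and A₁₁B₂₂ − A₂₂B₁₁ ≠ 0, then X and Y are both skew-diagonal, i.e., X₁₁ = X₂₂ = Y₁₁ = Y₂₂ = 0. -/
/-! Since X₀₀ = 0, the entry (XBY)₀₀ = X₀₁B₁₁Y₁₀ = 1 makes X₀₁, B₁₁, Y₁₀ nonzero, so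
(XBY)₀₁ = X₀₁B₁₁Y₁₁ = 0 gives Y₁₁ = 0, and then (XAY)₁₁ = X₁₀A₀₀Y₀₁ = 1 gives X₁₀ ≠ 0.
The (1,0) entries of both equations form a homogeneous linear system in X₁₀Y₀₀ and X₁₁Y₁₀
with determinant A₀₀B₁₁ − A₁₁B₀₀ ≠ 0, so both products vanish. -/

open Matrix

theorem Matrix.isDiag_of_fin_two {α : Type*} [Zero α] {A : Matrix (Fin 2) (Fin 2) α}
    (h01 : A 0 1 = 0) (h10 : A 1 0 = 0) : A.IsDiag := by
  intro i j hij
  fin_cases i <;> fin_cases j <;> simp_all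

theorem Matrix.IsDiag.mul_mul_apply {n R : Type*} [Fintype n] [DecidableEq n]
    [NonUnitalNonAssocSemiring R]
    {A : Matrix n n R} (hA : A.IsDiag) (X Y : Matrix n n R) (i j : n) :
    (X * A * Y) i j = ∑ k, X i k * A k k * Y k j := by
  conv_lhs => rw [← hA.diagonal_diag]
  simp only [mul_apply (M := X * _), mul_diagonal, diag_apply]

theorem eq_zero_and_eq_zero_of_det_ne_zero {R : Type*} [CommRing R] [NoZeroDivisors R]
    {a₀ a₁ b₀ b₁ u v : R} (hdet : a₀ * b₁ - a₁ * b₀ ≠ 0)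
    (ha : a₀ * u + a₁ * v = 0) (hb : b₀ * u + b₁ * v = 0) : u = 0 ∧ v = 0 := by
  refine ⟨(mul_eq_zero.1 ?_).resolve_right hdet, (mul_eq_zero.1 ?_).resolve_right hdet⟩
  · linear_combination b₁ * ha - a₁ * hb
  · linear_combination a₀ * hb - b₀ * ha

theorem skewDiagonal_case_general (A B X Y : Matrix (Fin 2) (Fin 2) ℂ) (z₀ z₁ : ℂ)
    (hA : A 0 1 = 0 ∧ A 1 0 = 0) (hB : B 0 1 = 0 ∧ B 1 0 = 0)
    (h1 : X * A * Y = !![z₀, 0; 0, 1]) (h2 : X * B * Y = !![1, 0; 0, z₁])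
    (hX11 : X 0 0 = 0)
    (hdet : A 0 0 * B 1 1 - A 1 1 * B 0 0 ≠ 0) :
    X 0 0 = 0 ∧ X 1 1 = 0 ∧ Y 0 0 = 0 ∧ Y 1 1 = 0 := by
  have entry (M : Matrix (Fin 2) (Fin 2) ℂ) (hM : M 0 1 = 0 ∧ M 1 0 = 0) (i j : Fin 2) :
      (X * M * Y) i j = X i 0 * M 0 0 * Y 0 j + X i 1 * M 1 1 * Y 1 j := by
    rw [(isDiag_of_fin_two hM.1 hM.2).mul_mul_apply, Fin.sum_univ_two]
  have a₁₀ := congrFun₂ h1 1 0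
  have a₁₁ := congrFun₂ h1 1 1
  have b₀₀ := congrFun₂ h2 0 0
  have b₀₁ := congrFun₂ h2 0 1
  have b₁₀ := congrFun₂ h2 1 0
  simp only [entry A hA, entry B hB, hX11, of_apply, cons_val', cons_val_zero, cons_val_one,
    empty_val', cons_val_fin_one, zero_mul, zero_add] at a₁₀ a₁₁ b₀₀ b₀₁ b₁₀
  have hY₁₁ : Y 1 1 = 0 := (mul_eq_zero.1 b₀₁).resolve_left (left_ne_zero_of_mul_eq_one b₀₀)
  rw [hY₁₁, mul_zero, add_zero] at a₁₁
  have hX₁₀ : X 1 0 ≠ 0 := left_ne_zero_of_mul (left_ne_zero_of_mul_eq_one a₁₁)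
  obtain ⟨hu, hv⟩ := eq_zero_and_eq_zero_of_det_ne_zero (u := X 1 0 * Y 0 0)
    (v := X 1 1 * Y 1 0) hdet (by linear_combination a₁₀) (by linear_combination b₁₀)
  exact ⟨hX11, (mul_eq_zero.1 hv).resolve_right (right_ne_zero_of_mul_eq_one b₀₀),
    (mul_eq_zero.1 hu).resolve_left hX₁₀, hY₁₁⟩

theorem skewDiagonal_case (A B X Y : Matrix (Fin 2) (Fin 2) ℂ) (z₀ z₁ : ℂ)
    (hA : A 0 1 = 0 ∧ A 1 0 = 0) (hB : B 0 1 = 0 ∧ B 1 0 = 0)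
    (hX : IsUnit X) (hY : IsUnit Y)
    (hz₀ : ‖z₀‖ < 1) (hz₁ : ‖z₁‖ < 1)
    (h1 : X * A * Y = !![z₀, 0; 0, 1]) (h2 : X * B * Y = !![1, 0; 0, z₁])
    (hX11 : X 0 0 = 0)
    (hdet : A 0 0 * B 1 1 - A 1 1 * B 0 0 ≠ 0) :
    X 0 0 = 0 ∧ X 1 1 = 0 ∧ Y 0 0 = 0 ∧ Y 1 1 = 0 :=
  skewDiagonal_case_general A B X Y z₀ z₁ hA hB h1 h2 hX11 hdet
end

section
/- Let A, B be diagonal 2×2 complex matrices and let X, Y be invertible 2×2 complex matrices such that X*A*Y = diag(z₀, 1) and X*B*Y = diag(1, z₁) for some complex numbers z₀, z₁ with |z₀| < 1 and |z₁| < 1. If X₁₁ ≠ 0 and A₁₁B₂₂ − A₂₂B₁₁ ≠ 0, then X and Y are both diagonal and moreover |A₁₁| < |B₁₁|, |A₂₂| > |B₂₂|, A₂₂·X₂₂·Y₂₂ = 1, and B₁₁·X₁₁·Y₁₁ = 1. -/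
open Matrix

/-
Write aₖ = Aₖₖ, bₖ = Bₖₖ (indices from 1). Off the diagonal, the (i,j) entries of XAY and XBY
are p a₁ + q a₂ and p b₁ + q b₂ with p = X_{i1} Y_{1j}, q = X_{i2} Y_{2j}; as a₁ b₂ - a₂ b₁ ≠ 0,
both products vanish. With X₁₁ ≠ 0 this kills Y₁₂, so the (2,2) entry of XAY reads
a₂ X₂₂ Y₂₂ = 1, which kills X₁₂ and Y₂₁; likewise b₁ X₁₁ Y₁₁ = 1 then kills X₂₁. The remaining
diagonal entries give a₁ = z₀ b₁ and b₂ = z₁ a₂.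
-/

lemma mul_mul_apply_fin_two_of_offDiag_eq_zero {R : Type*} [CommRing R]
    {A : Matrix (Fin 2) (Fin 2) R} (hA : A 0 1 = 0 ∧ A 1 0 = 0)
    (X Y : Matrix (Fin 2) (Fin 2) R) (i j : Fin 2) :
    (X * A * Y) i j = X i 0 * Y 0 j * A 0 0 + X i 1 * Y 1 j * A 1 1 := by
  simp only [mul_apply, Fin.sum_univ_two, hA.1, hA.2]
  ring

lemma eq_zero_and_eq_zero_of_linear_forms_eq_zero {R : Type*} [CommRing R] [NoZeroDivisors R]
    {a₀ a₁ b₀ b₁ p q : R} (hdet : a₀ * b₁ - a₁ * b₀ ≠ 0)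
    (ha : p * a₀ + q * a₁ = 0) (hb : p * b₀ + q * b₁ = 0) : p = 0 ∧ q = 0 := by
  have hp : (a₀ * b₁ - a₁ * b₀) * p = 0 := by linear_combination b₁ * ha - a₁ * hb
  have hq : (a₀ * b₁ - a₁ * b₀) * q = 0 := by linear_combination a₀ * hb - b₀ * ha
  exact ⟨(mul_eq_zero.1 hp).resolve_left hdet, (mul_eq_zero.1 hq).resolve_left hdet⟩

lemma norm_lt_norm_of_mul_mul_eq {𝕜 : Type*} [NormedField 𝕜] {a b s t z : 𝕜}
    (ha : a * s * t = z) (hb : b * s * t = 1) (hz : ‖z‖ < 1) : ‖a‖ < ‖b‖ := by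
  have hb0 : b ≠ 0 := left_ne_zero_of_mul (left_ne_zero_of_mul_eq_one hb)
  have hab : a = z * b := by linear_combination b * ha - a * hb
  rw [hab, norm_mul]
  exact mul_lt_of_lt_one_left (norm_pos_iff.2 hb0) hz

theorem diagonal_case_general (A B X Y : Matrix (Fin 2) (Fin 2) ℂ) (z₀ z₁ : ℂ)
    (hA : A 0 1 = 0 ∧ A 1 0 = 0) (hB : B 0 1 = 0 ∧ B 1 0 = 0)
    (hz₀ : ‖z₀‖ < 1) (hz₁ : ‖z₁‖ < 1)
    (h1 : X * A * Y = !![z₀, 0; 0, 1]) (h2 : X * B * Y = !![1, 0; 0, z₁])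
    (hX11 : X 0 0 ≠ 0)
    (hdet : A 0 0 * B 1 1 - A 1 1 * B 0 0 ≠ 0) :
    (X 0 1 = 0 ∧ X 1 0 = 0 ∧ Y 0 1 = 0 ∧ Y 1 0 = 0) ∧
    ‖A 0 0‖ < ‖B 0 0‖ ∧
    ‖A 1 1‖ > ‖B 1 1‖ ∧
    A 1 1 * X 1 1 * Y 1 1 = 1 ∧
    B 0 0 * X 0 0 * Y 0 0 = 1 := by
  have eA (i j : Fin 2) := (mul_mul_apply_fin_two_of_offDiag_eq_zero hA X Y i j).symm.trans
    (congrFun (congrFun h1 i) j)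
  have eB (i j : Fin 2) := (mul_mul_apply_fin_two_of_offDiag_eq_zero hB X Y i j).symm.trans
    (congrFun (congrFun h2 i) j)
  obtain ⟨h01₀, h01₁⟩ := eq_zero_and_eq_zero_of_linear_forms_eq_zero hdet
    (by simpa using eA 0 1) (by simpa using eB 0 1)
  obtain ⟨h10₀, h10₁⟩ := eq_zero_and_eq_zero_of_linear_forms_eq_zero hdet
    (by simpa using eA 1 0) (by simpa using eB 1 0)
  have hY01 : Y 0 1 = 0 := (mul_eq_zero.1 h01₀).resolve_left hX11
  have ha₁ : A 1 1 * X 1 1 * Y 1 1 = 1 := by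
    linear_combination (by simpa [hY01] using eA 1 1 : X 1 1 * Y 1 1 * A 1 1 = 1)
  have hX01 : X 0 1 = 0 :=
    (mul_eq_zero.1 h01₁).resolve_right (right_ne_zero_of_mul_eq_one ha₁)
  have hY10 : Y 1 0 = 0 :=
    (mul_eq_zero.1 h10₁).resolve_left (right_ne_zero_of_mul (left_ne_zero_of_mul_eq_one ha₁))
  have hb₀ : B 0 0 * X 0 0 * Y 0 0 = 1 := by
    linear_combination (by simpa [hX01] using eB 0 0 : X 0 0 * Y 0 0 * B 0 0 = 1)
  have hX10 : X 1 0 = 0 :=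
    (mul_eq_zero.1 h10₀).resolve_right (right_ne_zero_of_mul_eq_one hb₀)
  have ha₀ : A 0 0 * X 0 0 * Y 0 0 = z₀ := by
    linear_combination (by simpa [hX01] using eA 0 0 : X 0 0 * Y 0 0 * A 0 0 = z₀)
  have hb₁ : B 1 1 * X 1 1 * Y 1 1 = z₁ := by
    linear_combination (by simpa [hX10] using eB 1 1 : X 1 1 * Y 1 1 * B 1 1 = z₁)
  exact ⟨⟨hX01, hX10, hY01, hY10⟩, norm_lt_norm_of_mul_mul_eq ha₀ hb₀ hz₀,
    norm_lt_norm_of_mul_mul_eq hb₁ ha₁ hz₁, ha₁, hb₀⟩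

theorem diagonal_case (A B X Y : Matrix (Fin 2) (Fin 2) ℂ) (z₀ z₁ : ℂ)
    (hA : A 0 1 = 0 ∧ A 1 0 = 0) (hB : B 0 1 = 0 ∧ B 1 0 = 0)
    (hX : IsUnit X) (hY : IsUnit Y)
    (hz₀ : ‖z₀‖ < 1) (hz₁ : ‖z₁‖ < 1)
    (h1 : X * A * Y = !![z₀, 0; 0, 1]) (h2 : X * B * Y = !![1, 0; 0, z₁])
    (hX11 : X 0 0 ≠ 0)
    (hdet : A 0 0 * B 1 1 - A 1 1 * B 0 0 ≠ 0) :
    (X 0 1 = 0 ∧ X 1 0 = 0 ∧ Y 0 1 = 0 ∧ Y 1 0 = 0) ∧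
    ‖A 0 0‖ < ‖B 0 0‖ ∧
    ‖A 1 1‖ > ‖B 1 1‖ ∧
    A 1 1 * X 1 1 * Y 1 1 = 1 ∧
    B 0 0 * X 0 0 * Y 0 0 = 1 :=
  diagonal_case_general A B X Y z₀ z₁ hA hB hz₀ hz₁ h1 h2 hX11 hdet
end

section
/- Let A, B be diagonal 2×2 complex matrices whose diagonal entries are proportional, i.e., A₁₁·B₂₂ = A₂₂·B₁₁ with A₂₂ ≠ 0 and B₂₂ ≠ 0. Then there exist no invertible 2×2 complex matrices X, Y and complex numbers z₀, z₁ with |z₀| < 1, |z₁| < 1 such that X*A*Y = diag(z₀, 1) and X*B*Y = diag(1, z₁). -/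
/-! Proportional diagonal matrices satisfy `B = c • A`, hence `X B Y = c • X A Y`, i.e.
`diag(1, z₁) = c • diag(z₀, 1)`. This forces `z₁ = c` and `c z₀ = 1`, hence `z₀ z₁ = 1`, which is impossible when both factors have norm `< 1`. -/

open Matrix

theorem mul_ne_one_of_norm_lt_one {R : Type*} [SeminormedRing R] [NormOneClass R] {a b : R}
    (ha : ‖a‖ < 1) (hb : ‖b‖ < 1) : a * b ≠ 1 := by
  intro hab
  have : ‖a * b‖ < 1 :=
    (norm_mul_le a b).trans_lt (mul_lt_one_of_nonneg_of_lt_one_left (norm_nonneg a) ha hb.le)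
  simp [hab] at this

namespace Matrix

theorem eq_smul_of_diagonal_proportional {K : Type*} [Field K] {A B : Matrix (Fin 2) (Fin 2) K}
    (hA : A 0 1 = 0 ∧ A 1 0 = 0) (hB : B 0 1 = 0 ∧ B 1 0 = 0)
    (hprop : A 0 0 * B 1 1 = A 1 1 * B 0 0) (hA11 : A 1 1 ≠ 0) :
    B = (B 1 1 / A 1 1) • A := by
  ext i j
  fin_cases i <;> fin_cases j
  · simp only [smul_apply, smul_eq_mul, Fin.zero_eta]
    field_simp
    linear_combination -hprop
  · simp [hA.1, hB.1]
  · simp [hA.2, hB.2]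
  · simp [hA11]

theorem mul_eq_one_of_smul_diag_eq {R : Type*} [CommRing R] {c z₀ z₁ : R}
    (h : c • !![z₀, 0; 0, 1] = !![1, 0; 0, z₁]) : z₀ * z₁ = 1 := by
  have h00 : c * z₀ = 1 := by simpa using congrFun (congrFun h 0) 0
  have h11 : c = z₁ := by simpa using congrFun (congrFun h 1) 1
  rw [← h11, mul_comm, h00]

end Matrix

theorem proportional_contradiction_general (A B : Matrix (Fin 2) (Fin 2) ℂ)
    (hA : A 0 1 = 0 ∧ A 1 0 = 0) (hB : B 0 1 = 0 ∧ B 1 0 = 0)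
    (hprop : A 0 0 * B 1 1 = A 1 1 * B 0 0)
    (hA22 : A 1 1 ≠ 0) :
    ¬ ∃ (X Y : Matrix (Fin 2) (Fin 2) ℂ) (z₀ z₁ : ℂ),
      IsUnit X ∧ IsUnit Y ∧ ‖z₀‖ < 1 ∧ ‖z₁‖ < 1 ∧
      X * A * Y = !![z₀, 0; 0, 1] ∧ X * B * Y = !![1, 0; 0, z₁] := by
  rintro ⟨X, Y, z₀, z₁, -, -, hz₀, hz₁, hXAY, hXBY⟩
  obtain ⟨c, rfl⟩ : ∃ c : ℂ, B = c • A := ⟨_, eq_smul_of_diagonal_proportional hA hB hprop hA22⟩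
  rw [Matrix.mul_smul, Matrix.smul_mul, hXAY] at hXBY
  exact mul_ne_one_of_norm_lt_one hz₀ hz₁ (mul_eq_one_of_smul_diag_eq hXBY)

theorem proportional_contradiction (A B : Matrix (Fin 2) (Fin 2) ℂ)
    (hA : A 0 1 = 0 ∧ A 1 0 = 0) (hB : B 0 1 = 0 ∧ B 1 0 = 0)
    (hprop : A 0 0 * B 1 1 = A 1 1 * B 0 0)
    (hA22 : A 1 1 ≠ 0) (hB22 : B 1 1 ≠ 0) :
    ¬ ∃ (X Y : Matrix (Fin 2) (Fin 2) ℂ) (z₀ z₁ : ℂ),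
      IsUnit X ∧ IsUnit Y ∧ ‖z₀‖ < 1 ∧ ‖z₁‖ < 1 ∧
      X * A * Y = !![z₀, 0; 0, 1] ∧ X * B * Y = !![1, 0; 0, z₁] :=
  proportional_contradiction_general A B hA hB hprop hA22
end
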